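/- ε-best reply of player y by staying just ahead (case b of Theorem 2, second branch of B_y): assume the utilities are normalized by pλ = 1 and c = 0, and that 0 < d0 := d_x(x0, y0) < d < d_y(x0, y0), where d = T·(v_max − v_min) and v_min < v_max. Let 0 < ε ≤ d0 and let v ∈ Γ with v ≥ v_min + d0/T, and set v* := v − d0/T + ε/T (which belongs to Γ). Then u_y(x0, v, y0, v*) = D − ε, and for every w ∈ Γ, u_y(x0, v, y0, w) ≤ u_y(x0, v, y0, v*) + ε; i.e., v* is an ε-best reply of player y to player x driving at speed v. -/
import Mathlib


/-- The reduction of a real number `r` modulo the circuit length `D`: the relative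
position on the torus, `(r) mod D = r − D·⌊r/D⌋ ∈ [0, D)`. -/
noncomputable def modD (D r : ℝ) : ℝ := r - D * (⌊r / D⌋ : ℝ)

/-- The directed (clockwise) distance from `x` to `y` on the circuit of length `D`. -/
noncomputable def dirX (D x y : ℝ) : ℝ := if x ≤ y then y - x else D + y - x

/-- The directed (clockwise) distance from `y` to `x` on the circuit of length `D`. -/
noncomputable def dirY (D x y : ℝ) : ℝ := dirX D y x

/-- Normalized utility (pλ = 1, c = 0) of player x: starting from `x0`, `y0` and
driving at speeds `vx`, `vy` for time `T`. -/
noncomputable def uXn (D T x0 y0 vx vy : ℝ) : ℝ :=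
  if modD D (x0 + T * vx) ≠ modD D (y0 + T * vy) then
    dirX D (modD D (x0 + T * vx)) (modD D (y0 + T * vy))
  else D / 2

/-- Normalized utility (pλ = 1, c = 0) of player y. -/
noncomputable def uYn (D T x0 y0 vx vy : ℝ) : ℝ :=
  if modD D (x0 + T * vx) ≠ modD D (y0 + T * vy) then
    dirY D (modD D (x0 + T * vx)) (modD D (y0 + T * vy))
  else D / 2

lemma modD_eq_fract (D r : ℝ) (hD : D ≠ 0) : modD D r = D * Int.fract (r / D) := by
  unfold modD Int.fract
  field_simp

lemma modD_nonneg (D r : ℝ) (hD : 0 < D) : 0 ≤ modD D r := by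
  rw [modD_eq_fract D r hD.ne']
  exact mul_nonneg hD.le (Int.fract_nonneg _)

lemma modD_lt (D r : ℝ) (hD : 0 < D) : modD D r < D := by
  rw [modD_eq_fract D r hD.ne']
  calc D * Int.fract (r / D) < D * 1 := by
        exact mul_lt_mul_of_pos_left (Int.fract_lt_one _) hD
    _ = D := mul_one D

lemma modD_eq_self (D r : ℝ) (hD : 0 < D) (h0 : 0 ≤ r) (h1 : r < D) : modD D r = r := by
  unfold modD
  have : ⌊r / D⌋ = 0 := by
    rw [Int.floor_eq_zero_iff]
    constructor
    · positivity
    · rw [div_lt_one hD]; exact h1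
  rw [this]; simp

lemma modD_sub_int (D r : ℝ) (k : ℤ) (hD : 0 < D) : modD D (r - D * k) = modD D r := by
  rw [modD_eq_fract _ _ hD.ne', modD_eq_fract _ _ hD.ne']
  have : (r - D * k) / D = r / D - k := by field_simp
  rw [this, Int.fract_sub_intCast]

lemma modD_add_int (D r : ℝ) (k : ℤ) (hD : 0 < D) : modD D (r + D * k) = modD D r := by
  have := modD_sub_int D (r + D * k) k hD
  simpa using this.symm

/-- ε-best reply of player y by staying just ahead: if player x drives at speed
v ≥ v_min + d₀/T and 0 < ε ≤ d₀, then v* = v − d₀/T + ε/T lies in Γ, yields payoff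
D − ε for player y, and is an ε-best reply of player y to v. -/
theorem eps_best_reply_y_staying_ahead
    (D T vmin vmax x0 y0 d0 d ε v : ℝ)
    (hD : 0 < D) (hvmin : 0 < vmin) (hvv : vmin < vmax) (hT : 0 < T)
    (hshort : T * vmax < D / 2)
    (hx0 : x0 ∈ Set.Ico 0 D) (hy0 : y0 ∈ Set.Ico 0 D)
    (hd0 : d0 = dirX D x0 y0) (hd : d = T * (vmax - vmin))
    (hd0pos : 0 < d0) (hd0d : d0 < d) (hdy : d < dirY D x0 y0)
    (hε : 0 < ε) (hεd0 : ε ≤ d0)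
    (hv : v ∈ Set.Icc vmin vmax) (hvfast : vmin + d0 / T ≤ v) :
    v - d0 / T + ε / T ∈ Set.Icc vmin vmax ∧
    uYn D T x0 y0 v (v - d0 / T + ε / T) = D - ε ∧
    ∀ w ∈ Set.Icc vmin vmax,
      uYn D T x0 y0 v w ≤ uYn D T x0 y0 v (v - d0 / T + ε / T) + ε := by
  obtain ⟨hv1, hv2⟩ := hv
  have hεD : ε < D := by
    have : d < D := by
      rw [hd]
      have : T * (vmax - vmin) < T * vmax := by nlinarith
      linarith
    linarith
  have hmem : v - d0 / T + ε / T ∈ Set.Icc vmin vmax := by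
    constructor
    · have : 0 < ε / T := by positivity
      linarith
    · have : ε / T ≤ d0 / T := by gcongr
      linarith
  have hpay : uYn D T x0 y0 v (v - d0 / T + ε / T) = D - ε := by
    set a := modD D (x0 + T * v) with ha
    have ha0 : 0 ≤ a := modD_nonneg _ _ hD
    have haD : a < D := modD_lt _ _ hD
    -- y0 + T * v* = x0 + T * v + ε (mod D)
    have hsimp : y0 + T * (v - d0 / T + ε / T) = y0 + T * v - d0 + ε := by
      field_simp; ring
    have hy0eq : y0 = x0 + d0 ∨ y0 = x0 + d0 - D := by
      rw [hd0]; unfold dirX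
      split
      · left; ring
      · right; ring
    have hmody : modD D (y0 + T * (v - d0 / T + ε / T)) = modD D (x0 + T * v + ε) := by
      rw [hsimp]
      rcases hy0eq with h | h
      · rw [h]; ring_nf
      · rw [h]
        have : x0 + d0 - D + T * v - d0 + ε = (x0 + T * v + ε) - D * (1 : ℤ) := by
          push_cast; ring
        rw [this, modD_sub_int _ _ _ hD]
    -- x0 + T*v = a + D * ⌊(x0+T*v)/D⌋
    have hxeq : modD D (x0 + T * v + ε) = modD D (a + ε) := by
      have : a + ε = (x0 + T * v + ε) - D * (⌊(x0 + T * v) / D⌋ : ℤ) := by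
        rw [ha]; unfold modD; ring
      rw [this, modD_sub_int _ _ _ hD]
    by_cases hcase : a + ε < D
    · have hmod : modD D (a + ε) = a + ε := modD_eq_self _ _ hD (by linarith) hcase
      have hne : a ≠ a + ε := by linarith
      unfold uYn
      rw [hmody, hxeq, hmod, if_pos (by exact fun h => hne h)]
      unfold dirY dirX
      rw [if_neg (by linarith)]
      ring
    · push_neg at hcase
      have hmod : modD D (a + ε) = a + ε - D := by
        have h1 : a + ε - D = (a + ε) - D * (1 : ℤ) := by push_cast; ring
        rw [← modD_eq_self D (a + ε - D) hD (by linarith) (by linarith), h1,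
          modD_sub_int _ _ _ hD]
      have hne : a ≠ a + ε - D := by intro h; linarith [h]
      unfold uYn
      rw [hmody, hxeq, hmod, if_pos (by exact fun h => hne h)]
      unfold dirY dirX
      rw [if_pos (by linarith)]
      ring
  refine ⟨hmem, hpay, ?_⟩
  intro w hw
  have hub : uYn D T x0 y0 v w ≤ D := by
    unfold uYn
    split
    · unfold dirY dirX
      have h1 := modD_nonneg D (x0 + T * v) hD
      have h2 := modD_lt D (x0 + T * v) hD
      have h3 := modD_nonneg D (y0 + T * w) hD
      have h4 := modD_lt D (y0 + T * w) hD
      split <;> linarith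
    · linarith
  rw [hpay]
  linarith
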